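/- Let τ > 0 and a, c ∈ ℝ, and define g : ℝ → ℝ by g(u) = u·log u + c·u + (u − a)²/(2τ), where u·log u is interpreted as 0 at u = 0. If u* minimizes g over the half line [0, ∞), then u* > 0. -/
import Mathlib


/-- Positivity of minimizers in the variational Fokker–Planck step: any
minimizer over `[0, ∞)` of `u ↦ u log u + c u + (u − a)²/(2τ)` (with
`u log u = 0` at `u = 0`, as in Mathlib's convention `Real.log 0 = 0`)
is strictly positive. -/
theorem stmt_15 (τ : ℝ) (hτ : 0 < τ) (a c : ℝ) (us : ℝ)
    (hus : us ∈ Set.Ici (0 : ℝ))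
    (hmin : ∀ u ∈ Set.Ici (0 : ℝ),
      us * Real.log us + c * us + (us - a) ^ 2 / (2 * τ) ≤
      u * Real.log u + c * u + (u - a) ^ 2 / (2 * τ)) :
    0 < us := by
  rcases lt_or_eq_of_le (Set.mem_Ici.mp hus) with h | h
  · exact h
  · exfalso
    set K : ℝ := |c| + (1 + 2 * |a|) / (2 * τ) with hK
    have hKnn : 0 ≤ K := by positivity
    set u : ℝ := Real.exp (-(K + 1)) with hu
    have hu0 : 0 < u := Real.exp_pos _
    have hu1 : u ≤ 1 := by
      calc u ≤ Real.exp 0 := Real.exp_le_exp.mpr (by linarith)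
      _ = 1 := Real.exp_zero
    have hlog : Real.log u = -(K + 1) := Real.log_exp _
    have hmain := hmin u hu0.le
    rw [← h, hlog] at hmain
    simp only [Real.log_zero, mul_zero, zero_mul, zero_add, zero_sub] at hmain
    have h2τ : (0 : ℝ) < 2 * τ := by linarith
    have hmain' := mul_le_mul_of_nonneg_right hmain h2τ.le
    have hexp : (-a) ^ 2 / (2 * τ) * (2 * τ) = a ^ 2 := by field_simp
    have hexp2 : (u * -(K + 1) + c * u + (u - a) ^ 2 / (2 * τ)) * (2 * τ)
        = (u * -(K + 1) + c * u) * (2 * τ) + (u - a) ^ 2 := by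
      field_simp
    rw [hexp, hexp2] at hmain'
    have hc : c ≤ |c| := le_abs_self c
    have ha : -a ≤ |a| := neg_le_abs a
    have hKdef : K * (2 * τ) = |c| * (2 * τ) + (1 + 2 * |a|) := by
      rw [hK]; field_simp
    nlinarith [mul_pos hu0 h2τ, mul_le_mul_of_nonneg_left hc (le_of_lt hu0),
      mul_le_mul_of_nonneg_left ha (le_of_lt hu0), sq_nonneg u,
      mul_le_mul_of_nonneg_right hu1 hu0.le]
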